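/- For every ε > 0 there exists m ∈ ℕ such that for every interval [s,t] ⊆ [0,1] with s < t there exists an interval [s',t'] ∈ Λ(m) with |t − t'| < ε·(t − s) and |s − s'| < ε·(t − s). -/
import Mathlib


open Set

/-- `Λ_n(m)`: the collection of intervals `[(k−1+b)·2^(−n+a), (k+b)·2^(−n+a)]`
for `k ∈ {1, …, 2^n}` and `a, b ∈ {0, 1/m, …, (m−1)/m}`, encoded as pairs of
endpoints. -/
def LambdaN (n m : ℕ) : Set (ℝ × ℝ) :=
  {p | ∃ k i j : ℕ, 1 ≤ k ∧ k ≤ 2 ^ n ∧ i < m ∧ j < m ∧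
    p.1 = ((k : ℝ) - 1 + (j : ℝ) / m) * (2 : ℝ) ^ (-(n : ℝ) + (i : ℝ) / m) ∧
    p.2 = ((k : ℝ) + (j : ℝ) / m) * (2 : ℝ) ^ (-(n : ℝ) + (i : ℝ) / m)}

/-- `Λ(m) = ∪_n Λ_n(m)`. -/
def Lambda (m : ℕ) : Set (ℝ × ℝ) := ⋃ n : ℕ, LambdaN n m

set_option maxHeartbeats 1000000 in
/-- For every `ε > 0` there is `m` such that every interval `[s,t] ⊆ [0,1]` is
approximated by some `[s',t'] ∈ Λ(m)` with `|t − t'| < ε(t−s)` and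
`|s − s'| < ε(t−s)`. -/
theorem stmt_8 (ε : ℝ) (hε : 0 < ε) :
    ∃ m : ℕ, 1 ≤ m ∧ ∀ s t : ℝ, 0 ≤ s → s < t → t ≤ 1 →
      ∃ p ∈ Lambda m, |t - p.2| < ε * (t - s) ∧ |s - p.1| < ε * (t - s) := by
  obtain ⟨M, hM⟩ := exists_nat_gt (3 / ε)
  refine ⟨M + 1, Nat.le_add_left 1 M, fun s t hs hst ht1 => ?_⟩
  set m : ℕ := M + 1 with hmdef
  have hm1 : 1 ≤ m := Nat.le_add_left 1 M
  have hm0 : (0:ℝ) < m := by exact_mod_cast Nat.succ_pos M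
  have hm1' : (1:ℝ) ≤ m := by exact_mod_cast hm1
  have hem : (3:ℝ) < ε * m := by
    have h1 : (3:ℝ) / ε < m := lt_of_lt_of_le hM (by exact_mod_cast Nat.le_succ M)
    rw [div_lt_iff₀ hε] at h1
    linarith
  clear_value m
  set x := t - s with hxdef
  have hx : 0 < x := by simp only [hxdef]; linarith
  have hx1 : x ≤ 1 := by simp only [hxdef]; linarith
  have hts : t = s + x := by rw [hxdef]; ring
  clear_value x
  set r := Real.logb 2 x with hrdef
  have hr0 : r ≤ 0 := Real.logb_nonpos (by norm_num) hx.le hx1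
  have hxr : (2:ℝ) ^ r = x := Real.rpow_logb (by norm_num) (by norm_num) hx
  clear_value r
  set c : ℤ := ⌈(m:ℝ) * r⌉ with hcdef
  have hc0 : c ≤ 0 := Int.ceil_le.mpr
    (by simpa using mul_nonpos_of_nonneg_of_nonpos hm0.le hr0)
  have hcr : (m:ℝ) * r ≤ c := Int.le_ceil _
  have hcr2 : (c:ℝ) < m * r + 1 := Int.ceil_lt_add_one _
  clear_value c
  have hmZ : (0:ℤ) < (m:ℤ) := by exact_mod_cast hm1
  set n : ℕ := (-(c / (m:ℤ))).toNat with hndef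
  set i : ℕ := (c % (m:ℤ)).toNat with hidef
  have hiZ : (i:ℤ) = c % (m:ℤ) := Int.toNat_of_nonneg (Int.emod_nonneg c hmZ.ne')
  have hnZ : (n:ℤ) = -(c / (m:ℤ)) := by
    refine Int.toNat_of_nonneg ?_
    have h1 : c / (m:ℤ) ≤ 0 := by
      have := Int.ediv_le_ediv hmZ hc0
      simpa using this
    omega
  have him : i < m := by
    have h1 := Int.emod_lt_of_pos c hmZ
    omega
  clear_value n i
  have he : -(n:ℝ) + (i:ℝ) / m = (c:ℝ) / m := by
    have h2 : ((m:ℤ) * (-(n:ℤ)) + (i:ℤ) : ℤ) = c := by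
      have hdm : (m:ℤ) * (c / (m:ℤ)) + c % (m:ℤ) = c := Int.mul_ediv_add_emod c (m:ℤ)
      rw [hnZ, hiZ]
      linarith
    have h1 : (m:ℝ) * (-(n:ℝ)) + (i:ℝ) = c := by exact_mod_cast h2
    field_simp
    linarith
  set L : ℝ := (2:ℝ) ^ ((c:ℝ) / m) with hLdef
  have hL0 : (0:ℝ) < L := hLdef ▸ Real.rpow_pos_of_pos two_pos _
  clear_value L
  have hxL : x ≤ L := by
    rw [hLdef, ← hxr]
    refine (Real.rpow_le_rpow_left_iff (by norm_num : (1:ℝ) < 2)).2 ?_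
    rw [le_div_iff₀ hm0]
    linarith
  -- 2^(1/m) ≤ 1 + 1/m
  have hpow : (2:ℝ) ≤ (1 + 1/(m:ℝ)) ^ (m:ℕ) := by
    have hge : (0:ℝ) ≤ 1/(m:ℝ) := by positivity
    have h := one_add_mul_le_pow (a := 1/(m:ℝ)) (by linarith : (-2:ℝ) ≤ 1/(m:ℝ)) m
    have h2 : (m:ℝ) * (1/m) = 1 := by field_simp
    calc (2:ℝ) = 1 + (m:ℝ) * (1/m) := by rw [h2]; norm_num
    _ ≤ (1 + 1/(m:ℝ)) ^ (m:ℕ) := h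
  have h2m : (2:ℝ) ^ ((1:ℝ)/m) ≤ 1 + 1/(m:ℝ) := by
    have h1 : ((2:ℝ) ^ ((1:ℝ)/m)) ≤ ((1 + 1/(m:ℝ)) ^ (m:ℕ)) ^ ((1:ℝ)/m) :=
      Real.rpow_le_rpow (by norm_num) hpow (by positivity)
    rwa [← Real.rpow_natCast (1 + 1/(m:ℝ)) m, ← Real.rpow_mul (by positivity),
      mul_one_div, div_self hm0.ne', Real.rpow_one] at h1
  have hLx : L ≤ x * (1 + 1/(m:ℝ)) := by
    have hcm : (c:ℝ)/m ≤ r + 1/m := by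
      rw [div_le_iff₀ hm0]
      have heq : (r + 1/(m:ℝ)) * m = r * m + 1 := by field_simp
      linarith
    rw [hLdef]
    calc (2:ℝ) ^ ((c:ℝ)/m) ≤ (2:ℝ) ^ (r + 1/(m:ℝ)) :=
          (Real.rpow_le_rpow_left_iff (by norm_num : (1:ℝ) < 2)).2 hcm
    _ = (2:ℝ) ^ r * (2:ℝ) ^ ((1:ℝ)/m) := Real.rpow_add two_pos r (1/m)
    _ = x * (2:ℝ) ^ ((1:ℝ)/m) := by rw [hxr]
    _ ≤ x * (1 + 1/(m:ℝ)) := mul_le_mul_of_nonneg_left h2m hx.le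
  have h1m : 1/(m:ℝ) ≤ 1 := by rw [div_le_one hm0]; exact hm1'
  have hLx' : L ≤ x + x/m := by
    have : x * (1 + 1/(m:ℝ)) = x + x/m := by ring
    linarith
  have hL2x : L ≤ 2*x := by nlinarith
  have hLm : L/m < ε*x := by
    rw [div_lt_iff₀ hm0]
    nlinarith
  have hxmLm : x/m ≤ L/m := (div_le_div_iff_of_pos_right hm0).2 hxL
  set q : ℕ := ⌊(m:ℝ) * s / L⌋₊ with hqdef
  have hq1 : (q:ℝ) ≤ m * s / L := Nat.floor_le (div_nonneg (mul_nonneg hm0.le hs) hL0.le)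
  have hq2 : (m:ℝ) * s / L < q + 1 := Nat.lt_floor_add_one _
  clear_value q
  have hs'1 : (q:ℝ) * L / m ≤ s := by
    have h := (le_div_iff₀ hL0).1 hq1
    rw [div_le_iff₀ hm0]
    linarith
  have hs'2 : s < (q:ℝ) * L / m + L/m := by
    have h := (div_lt_iff₀ hL0).1 hq2
    have h2 : s < ((q:ℝ)+1) * L / m := by
      rw [lt_div_iff₀ hm0]
      linarith
    have h3 : ((q:ℝ)+1) * L / m = (q:ℝ) * L / m + L/m := by ring
    linarith
  set k : ℕ := q / m + 1 with hkdef
  set j : ℕ := q % m with hjdef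
  have hjm : j < m := Nat.mod_lt _ hm1
  have hk1 : 1 ≤ k := Nat.le_add_left 1 _
  have hkj : (m:ℝ) * ((k:ℝ) - 1) + (j:ℝ) = (q:ℝ) := by
    have hdm : m * (q / m) + q % m = q := Nat.div_add_mod q m
    have h1 : ((m:ℝ)) * ((q/m : ℕ):ℝ) + ((q % m : ℕ):ℝ) = (q:ℝ) := by exact_mod_cast hdm
    have hk' : (k:ℝ) = ((q/m : ℕ):ℝ) + 1 := by rw [hkdef]; push_cast; ring
    have hj' : (j:ℝ) = ((q % m : ℕ):ℝ) := by rw [hjdef]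
    rw [hk', hj']
    linarith
  have hkq : ((k:ℝ) - 1 + (j:ℝ)/m) = (q:ℝ)/m := by
    rw [eq_div_iff hm0.ne']
    field_simp
    linarith
  have hsL : s < (2:ℝ)^(n:ℕ) * L := by
    have hni : (n:ℝ) + (c:ℝ)/m = (i:ℝ)/m := by linarith
    have h1 : (2:ℝ)^(n:ℕ) * L = (2:ℝ) ^ ((i:ℝ)/m) := by
      rw [hLdef, ← Real.rpow_natCast 2 n, ← Real.rpow_add two_pos, hni]
    have h2 : (1:ℝ) ≤ (2:ℝ) ^ ((i:ℝ)/m) := by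
      have := (Real.rpow_le_rpow_left_iff (by norm_num : (1:ℝ) < 2)).2
        (by positivity : (0:ℝ) ≤ (i:ℝ)/m)
      simpa using this
    calc s < 1 := lt_of_lt_of_le hst ht1
    _ ≤ (2:ℝ)^(n:ℕ) * L := by rw [h1]; exact h2
  have hkn : k ≤ 2 ^ n := by
    have hq' : q < 2 ^ n * m := by
      rw [hqdef]
      refine (Nat.floor_lt (div_nonneg (mul_nonneg hm0.le hs) hL0.le)).2 ?_
      push_cast
      rw [div_lt_iff₀ hL0]
      nlinarith
    have := (Nat.div_lt_iff_lt_mul (by omega : 0 < m)).2 hq'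
    omega
  clear_value k j
  refine ⟨(((k:ℝ) - 1 + (j:ℝ)/m) * L, ((k:ℝ) + (j:ℝ)/m) * L), ?_, ?_, ?_⟩
  · refine mem_iUnion.2 ⟨n, k, i, j, hk1, hkn, him, hjm, ?_, ?_⟩
    · show ((k:ℝ) - 1 + (j:ℝ)/m) * L = _
      rw [he, hLdef]
    · show ((k:ℝ) + (j:ℝ)/m) * L = _
      rw [he, hLdef]
  · show |t - ((k:ℝ) + (j:ℝ)/m) * L| < ε * x
    have hp2 : ((k:ℝ) + (j:ℝ)/m) * L = (q:ℝ) * L / m + L := by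
      have : ((k:ℝ) + (j:ℝ)/m) = ((k:ℝ) - 1 + (j:ℝ)/m) + 1 := by ring
      rw [this, hkq]
      ring
    rw [hp2, abs_lt]
    constructor
    · linarith
    · linarith
  · show |s - ((k:ℝ) - 1 + (j:ℝ)/m) * L| < ε * x
    have hp1 : ((k:ℝ) - 1 + (j:ℝ)/m) * L = (q:ℝ) * L / m := by
      rw [hkq]; ring
    rw [hp1, abs_of_nonneg (by linarith)]
    linarith
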